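/- Let G = (V, E) be a directed graph on n ≥ 2 vertices with latin matrix L and latin powers L^[k]. For i ≠ j, the words of L^[n−1]_{ij} other than λ are exactly the vertex sequences of the Hamiltonian paths of G from v_i to v_j (elementary paths of length n − 1, which visit every vertex of G exactly once); in particular, G has a Hamiltonian path from v_i to v_j if and only if L^[n−1]_{ij} ≠ {λ}. -/

import Mathlib

/-!
By induction on `k ≥ 1`, the nonempty words of `L^[k]_{ab}` are exactly the distinguished words
with `k + 1` letters that trace a walk of `G` from `a` to `b`: composing an arc `[a, p]` with a
simple walk `y` from `p` yields either `λ` or `a :: y`, and it yields `a :: y` precisely when that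
word is still distinguished, while conversely the tail of a distinguished word is simple. When
`a ≠ b` a distinguished word from `a` to `b` cannot be cyclic, so for `k = n - 1` it is a simple
word with `n` letters, i.e. a listing of all vertices.
-/

attribute [local instance] Classical.propDecidable

/-- A simple word over an alphabet: a nonempty word with pairwise distinct letters. -/
def IsSimpleWord {α : Type*} (w : List α) : Prop := w ≠ [] ∧ w.Nodup

/-- A simple cyclic word: a word of the form `a₁…a_k a₁` with `a₁…a_k` a simple word. -/
def IsCyclicWord {α : Type*} (w : List α) : Prop :=
  ∃ (a : α) (l : List α), (a :: l).Nodup ∧ w = (a :: l) ++ [a]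

/-- `Σ_dw*`: the set of distinguished words over `α`, together with the empty word `λ = []`. -/
def DW (α : Type*) : Set (List α) :=
  {w | w = [] ∨ IsSimpleWord w ∨ IsCyclicWord w}

/-- The latin composition of (distinguished) words.  If either word is `λ` or a simple
cyclic word the result is `λ`; for simple words `x = a₁…a_k`, `y = b₁…b_r`:
`x ∘ℓ y = a₁…a_k b₂…b_r` if `a_k = b₁` and `{a₁,…,a_k} ∩ {b₂,…,b_r} = ∅`;
`x ∘ℓ y = a₁…a_k b₂…b_{r-1} a₁` if `a_k = b₁`, `b_r = a₁` and
`{a₁,…,a_k} ∩ {b₂,…,b_{r-1}} = ∅`; and `x ∘ℓ y = λ` otherwise. -/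
noncomputable def latin {α : Type*} (x y : List α) : List α :=
  if IsSimpleWord x ∧ IsSimpleWord y then
    if x.getLast? = y.head? ∧ ∀ a ∈ x, a ∉ y.tail then
      x ++ y.tail
    else if x.getLast? = y.head? ∧ y.getLast? = x.head? ∧ ∀ a ∈ x, a ∉ y.tail.dropLast then
      x ++ y.tail.dropLast ++ x.head?.toList
    else []
  else []

/-- A distinguished language over `α`: a set of distinguished words containing `λ`. -/
def IsDLang {α : Type*} (L : Set (List α)) : Prop := L ⊆ DW α ∧ [] ∈ L

/-- The latin composition of languages: `L₁ ∘ℓ L₂ = {x ∘ℓ y : x ∈ L₁, y ∈ L₂}`. -/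
def latinLang {α : Type*} (L₁ L₂ : Set (List α)) : Set (List α) :=
  {w | ∃ x ∈ L₁, ∃ y ∈ L₂, w = latin x y}

/-- The latin matrix of the directed graph `G = (Fin n, E)`: entry `(i,j)` is the
distinguished language `{λ, v_i v_j}` if `(v_i, v_j) ∈ E`, and `{λ}` otherwise. -/
noncomputable def latinMat {n : ℕ} (E : Set (Fin n × Fin n)) :
    Fin n → Fin n → Set (List (Fin n)) :=
  fun i j => if (i, j) ∈ E then {[], [i, j]} else {[]}

/-- Matrix product over the semiring of distinguished languages:
`(M ∘ℓ N)_{ij} = ⋃_m M_{im} ∘ℓ N_{mj}`. -/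
def latinMatMul {n : ℕ} (M N : Fin n → Fin n → Set (List (Fin n))) :
    Fin n → Fin n → Set (List (Fin n)) :=
  fun i j => ⋃ m : Fin n, latinLang (M i m) (N m j)

/-- Latin powers of a matrix: `L^[1] = L` and `L^[k] = L ∘ℓ L^[k-1]` for `k ≥ 2`. -/
noncomputable def latinPow {n : ℕ} (M : Fin n → Fin n → Set (List (Fin n))) :
    ℕ → Fin n → Fin n → Set (List (Fin n))
  | 0 => fun _ _ => {[]}
  | 1 => M
  | k + 2 => latinMatMul M (latinPow M (k + 1))

lemma List.dropLast_append_getLast?_toList {α : Type*} (l : List α) :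
    l.dropLast ++ l.getLast?.toList = l := by
  rcases List.eq_nil_or_concat l with rfl | ⟨l, a, rfl⟩ <;> simp

lemma List.getLast?_tail_of_ne_nil {α : Type*} {l : List α} (h : l.tail ≠ []) :
    l.tail.getLast? = l.getLast? := by
  obtain ⟨b, t, rfl⟩ := List.exists_cons_of_ne_nil (by rintro rfl; exact h rfl : l ≠ [])
  exact (List.getLast?_append_of_ne_nil [b] h).symm

lemma List.forall_count_eq_one_iff {α : Type*} [Fintype α] [BEq α] [LawfulBEq α] {l : List α} :
    (∀ a, l.count a = 1) ↔ l.Nodup ∧ l.length = Fintype.card α := by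
  rw [← List.get_bijective_iff, Fintype.bijective_iff_injective_and_card,
    ← List.nodup_iff_injective_get, Fintype.card_fin]

section DistinguishedWords

variable {α : Type*}

lemma nodup_tail_of_mem_DW {w : List α} (hw : w ∈ DW α) : w.tail.Nodup := by
  rcases hw with rfl | ⟨-, hnd⟩ | ⟨a, l, hnd, rfl⟩
  · exact List.nodup_nil
  · exact hnd.sublist w.tail_sublist
  · obtain ⟨ha, hl⟩ := List.nodup_cons.mp hnd
    simpa [List.nodup_append, hl] using fun b hb => ne_of_mem_of_not_mem hb ha

lemma nodup_dropLast_of_mem_DW {w : List α} (hw : w ∈ DW α) : w.dropLast.Nodup := by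
  rcases hw with rfl | ⟨-, hnd⟩ | ⟨a, l, hnd, rfl⟩
  · exact List.nodup_nil
  · exact hnd.sublist w.dropLast_sublist
  · rwa [List.dropLast_concat]

lemma mem_DW_iff_nodup {w : List α} (hw : w.head? ≠ w.getLast?) : w ∈ DW α ↔ w.Nodup := by
  refine ⟨fun h => ?_, fun h => Or.inr (Or.inl ⟨?_, h⟩)⟩
  · rcases h with rfl | ⟨-, hnd⟩ | ⟨a, l, -, rfl⟩
    · exact absurd rfl hw
    · exact hnd
    · exact absurd (by rw [List.getLast?_concat]; rfl) hw
  · rintro rfl; exact hw rfl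

lemma pair_mem_DW (a b : α) : [a, b] ∈ DW α := by
  by_cases hab : a = b
  · exact Or.inr (Or.inr ⟨a, [], List.nodup_singleton a, by rw [hab]; rfl⟩)
  · exact Or.inr (Or.inl ⟨List.cons_ne_nil _ _, by simpa using hab⟩)

lemma latin_nil_left (y : List α) : latin [] y = [] :=
  if_neg fun h => h.1.1 rfl

lemma latin_nil_right (x : List α) : latin x [] = [] :=
  if_neg fun h => h.2.1 rfl

lemma latin_mem_DW (x y : List α) : latin x y ∈ DW α := by
  unfold latin
  split_ifs with hs h₁ h₂
  · refine Or.inr (Or.inl ⟨by simp [hs.1.1], List.nodup_append.mpr ⟨hs.1.2, ?_, ?_⟩⟩)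
    · exact hs.2.2.sublist y.tail_sublist
    · rintro a ha b hb rfl; exact h₁.2 a ha hb
  · obtain ⟨a, l, rfl⟩ := List.exists_cons_of_ne_nil hs.1.1
    refine Or.inr (Or.inr ⟨a, l ++ y.tail.dropLast, ?_, by simp⟩)
    rw [← List.cons_append, List.nodup_append]
    refine ⟨hs.1.2, (hs.2.2.sublist y.tail_sublist).sublist y.tail.dropLast_sublist, ?_⟩
    rintro b hb c hc rfl; exact h₂.2.2 b hb hc
  all_goals exact Or.inl rfl

/-- In the cyclic case of `latin` the closing letter `x.head` is the last letter of `y`, so both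
nonempty cases produce the same word. -/
lemma latin_eq_append_tail_or_nil (x y : List α) : latin x y = x ++ y.tail ∨ latin x y = [] := by
  unfold latin
  split_ifs with hs h₁ h₂
  · exact Or.inl rfl
  · have hy : y.tail ≠ [] := by
      rintro hy; exact h₁ ⟨h₂.1, by simp [hy]⟩
    rw [List.append_assoc, ← (List.getLast?_tail_of_ne_nil hy).trans h₂.2.1,
      List.dropLast_append_getLast?_toList]
    exact Or.inl rfl
  all_goals exact Or.inr rfl

lemma latin_eq_append_tail {x y : List α} (hx : IsSimpleWord x) (hy : IsSimpleWord y)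
    (h : x.getLast? = y.head?) (hw : x ++ y.tail ∈ DW α) : latin x y = x ++ y.tail := by
  unfold latin
  rw [if_pos ⟨hx, hy⟩]
  by_cases h₁ : ∀ a ∈ x, a ∉ y.tail
  · rw [if_pos ⟨h, h₁⟩]
  have hne : y.tail ≠ [] := by rintro hy; simp [hy] at h₁
  -- `x ++ y.tail` repeats a letter, so it is a cyclic word: it ends with its first letter.
  have hcyc : (x ++ y.tail).head? = (x ++ y.tail).getLast? := by
    by_contra hc
    exact h₁ fun a ha hat => List.disjoint_of_nodup_append ((mem_DW_iff_nodup hc).mp hw) ha hat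
  rw [List.head?_append_of_ne_nil _ hx.1, List.getLast?_append_of_ne_nil _ hne] at hcyc
  have hdisj : ∀ a ∈ x, a ∉ y.tail.dropLast := by
    have hnd := nodup_dropLast_of_mem_DW hw
    rw [List.dropLast_append_of_ne_nil hne] at hnd
    exact fun a ha hat => List.disjoint_of_nodup_append hnd ha hat
  rw [if_neg fun h' => h₁ h'.2, if_pos ⟨h, (List.getLast?_tail_of_ne_nil hne) ▸ hcyc.symm, hdisj⟩,
    List.append_assoc, hcyc, List.dropLast_append_getLast?_toList]

lemma latin_pair_cons_of_mem_DW {a p : α} {t : List α} (ht : t ≠ [])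
    (hw : a :: p :: t ∈ DW α) : latin [a, p] (p :: t) = a :: p :: t := by
  have hap : [a, p].Nodup := by
    have hnd := nodup_dropLast_of_mem_DW hw
    rw [List.dropLast_cons_cons, List.dropLast_cons_of_ne_nil ht] at hnd
    exact hnd.sublist (by simp)
  exact latin_eq_append_tail ⟨List.cons_ne_nil _ _, hap⟩
    ⟨List.cons_ne_nil _ _, nodup_tail_of_mem_DW hw⟩ rfl hw

end DistinguishedWords

def IsDistinguishedWalk {α : Type*} (E : Set (α × α)) (k : ℕ) (a b : α) (w : List α) : Prop :=
  w ∈ DW α ∧ w.length = k + 1 ∧ w.head? = some a ∧ w.getLast? = some b ∧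
    w.IsChain (fun u v => (u, v) ∈ E)

namespace IsDistinguishedWalk

variable {α : Type*} {E : Set (α × α)} {k : ℕ} {a b : α} {w : List α}

lemma ne_nil (hw : IsDistinguishedWalk E k a b w) : w ≠ [] := by
  rintro rfl; exact absurd hw.2.1 (by simp)

lemma exists_eq_cons_cons (hw : IsDistinguishedWalk E (k + 1) a b w) :
    ∃ p t, w = a :: p :: t := by
  obtain ⟨-, hlen, hh, -⟩ := hw
  match w, hlen, hh with
  | _ :: p :: t, _, hh => exact ⟨p, t, by simpa using hh⟩

lemma tail {p : α} {t : List α} (hw : IsDistinguishedWalk E (k + 1) a b (a :: p :: t)) :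
    (a, p) ∈ E ∧ IsDistinguishedWalk E k p b (p :: t) := by
  obtain ⟨hdw, hlen, -, hl, hc⟩ := hw
  obtain ⟨hap, hc⟩ := List.isChain_cons_cons.mp hc
  exact ⟨hap, Or.inr (Or.inl ⟨List.cons_ne_nil _ _, nodup_tail_of_mem_DW hdw⟩),
    by simpa using hlen, rfl, by rwa [List.getLast?_cons_cons] at hl, hc⟩

lemma latin_pair {p : α} {y : List α} (hy : IsDistinguishedWalk E k p b y) (hap : (a, p) ∈ E)
    (hne : latin [a, p] y ≠ []) : IsDistinguishedWalk E (k + 1) a b (latin [a, p] y) := by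
  obtain ⟨hdw, hlen, hh, hl, hc⟩ := hy
  obtain ⟨t, rfl⟩ : ∃ t, y = p :: t := by
    cases y with
    | nil => simp at hh
    | cons q t => exact ⟨t, by simpa using hh⟩
  have hlatin : latin [a, p] (p :: t) = a :: p :: t :=
    (latin_eq_append_tail_or_nil _ _).resolve_right hne
  rw [hlatin]
  exact ⟨hlatin ▸ latin_mem_DW _ _, by simpa using hlen, rfl,
    by rwa [List.getLast?_cons_cons], List.isChain_cons_cons.mpr ⟨hap, hc⟩⟩

lemma iff_hamiltonian [Fintype α] [BEq α] [LawfulBEq α] (hab : a ≠ b)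
    (hk : k + 1 = Fintype.card α) :
    IsDistinguishedWalk E k a b w ↔ (∀ v, w.count v = 1) ∧ w.head? = some a ∧
      w.getLast? = some b ∧ w.IsChain (fun u v => (u, v) ∈ E) := by
  have hDW (hh : w.head? = some a) (hl : w.getLast? = some b) : w ∈ DW α ↔ w.Nodup :=
    mem_DW_iff_nodup (by rw [hh, hl]; exact Option.some_injective _ |>.ne hab)
  rw [List.forall_count_eq_one_iff]
  constructor
  · rintro ⟨hdw, hlen, hh, hl, hc⟩
    exact ⟨⟨(hDW hh hl).mp hdw, hlen.trans hk⟩, hh, hl, hc⟩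
  · rintro ⟨⟨hnd, hlen⟩, hh, hl, hc⟩
    exact ⟨(hDW hh hl).mpr hnd, hlen.trans hk.symm, hh, hl, hc⟩

end IsDistinguishedWalk

section LatinMatrix

variable {n : ℕ} {E : Set (Fin n × Fin n)}

lemma mem_latinMat {a b : Fin n} {w : List (Fin n)} :
    w ∈ latinMat E a b ↔ w = [] ∨ ((a, b) ∈ E ∧ w = [a, b]) := by
  unfold latinMat; split_ifs with h <;> simp [h]

lemma mem_latinMat_iff_isDistinguishedWalk {a b : Fin n} {w : List (Fin n)} :
    w ∈ latinMat E a b ↔ w = [] ∨ IsDistinguishedWalk E 1 a b w := by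
  rw [mem_latinMat]
  refine or_congr_right ⟨?_, ?_⟩
  · rintro ⟨hab, rfl⟩
    exact ⟨pair_mem_DW a b, rfl, rfl, rfl, List.isChain_pair.mpr hab⟩
  · rintro ⟨-, hlen, hh, hl, hc⟩
    obtain ⟨u, v, rfl⟩ := List.length_eq_two.mp hlen
    obtain ⟨rfl, rfl⟩ : u = a ∧ v = b := by simp_all
    exact ⟨List.isChain_pair.mp hc, rfl⟩

lemma mem_latinMatMul_latinMat_iff {N : Fin n → Fin n → Set (List (Fin n))} {k : ℕ} (hk : 1 ≤ k)
    {b : Fin n} (hN : ∀ p w, w ∈ N p b ↔ w = [] ∨ IsDistinguishedWalk E k p b w)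
    {a : Fin n} {w : List (Fin n)} :
    w ∈ latinMatMul (latinMat E) N a b ↔ w = [] ∨ IsDistinguishedWalk E (k + 1) a b w := by
  simp only [latinMatMul, latinLang, Set.mem_iUnion, Set.mem_ofPred_eq]
  constructor
  · rintro ⟨p, x, hx, y, hy, rfl⟩
    rcases mem_latinMat.mp hx with rfl | ⟨hap, rfl⟩
    · exact Or.inl (latin_nil_left y)
    rcases (hN p y).mp hy with rfl | hy
    · exact Or.inl (latin_nil_right _)
    by_cases hne : latin [a, p] y = []
    · exact Or.inl hne
    · exact Or.inr (hy.latin_pair hap hne)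
  · rintro (rfl | hw)
    · exact ⟨a, [], mem_latinMat.mpr (Or.inl rfl), [], (hN a []).mpr (Or.inl rfl),
        (latin_nil_left []).symm⟩
    obtain ⟨p, t, rfl⟩ := hw.exists_eq_cons_cons
    have ht : t ≠ [] := by rintro rfl; have := hw.2.1; simp at this; omega
    obtain ⟨hap, hy⟩ := hw.tail
    exact ⟨p, [a, p], mem_latinMat.mpr (Or.inr ⟨hap, rfl⟩), p :: t, (hN p _).mpr (Or.inr hy),
      (latin_pair_cons_of_mem_DW ht hw.1).symm⟩

theorem mem_latinPow_latinMat_iff {k : ℕ} (hk : 1 ≤ k) {a b : Fin n} {w : List (Fin n)} :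
    w ∈ latinPow (latinMat E) k a b ↔ w = [] ∨ IsDistinguishedWalk E k a b w := by
  induction k, hk using Nat.le_induction generalizing a w with
  | base => exact mem_latinMat_iff_isDistinguishedWalk
  | succ k hk ih =>
    obtain ⟨k, rfl⟩ := Nat.exists_eq_add_of_le' hk
    exact mem_latinMatMul_latinMat_iff hk fun _ _ => ih

end LatinMatrix

/-- for `n ≥ 2` and `i ≠ j`, the words of `L^[n-1]_{ij}` other than `λ`
are exactly the vertex sequences of the Hamiltonian paths of `G` from `v_i` to `v_j`
(sequences listing each vertex exactly once, starting at `v_i`, ending at `v_j`, and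
following arcs of `G`); in particular `G` has a Hamiltonian path from `v_i` to `v_j`
iff `L^[n-1]_{ij} ≠ {λ}`. -/
theorem latinPow_hamiltonian_paths (n : ℕ) (hn : 2 ≤ n) (E : Set (Fin n × Fin n))
    (i j : Fin n) (hij : i ≠ j) :
    (∀ w : List (Fin n),
      (w ∈ latinPow (latinMat E) (n - 1) i j ∧ w ≠ []) ↔
        ((∀ v : Fin n, w.count v = 1) ∧ w.head? = some i ∧ w.getLast? = some j ∧
          w.Chain' (fun a b => (a, b) ∈ E))) ∧
    ((∃ w : List (Fin n),
        (∀ v : Fin n, w.count v = 1) ∧ w.head? = some i ∧ w.getLast? = some j ∧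
          w.Chain' (fun a b => (a, b) ∈ E)) ↔
      latinPow (latinMat E) (n - 1) i j ≠ {([] : List (Fin n))}) := by
  have hmem (w : List (Fin n)) :=
    mem_latinPow_latinMat_iff (E := E) (a := i) (b := j) (w := w) (show 1 ≤ n - 1 by omega)
  have hpaths (w : List (Fin n)) :
      (w ∈ latinPow (latinMat E) (n - 1) i j ∧ w ≠ []) ↔
        (∀ v : Fin n, w.count v = 1) ∧ w.head? = some i ∧ w.getLast? = some j ∧
          w.IsChain (fun a b => (a, b) ∈ E) := by
    rw [hmem, ← IsDistinguishedWalk.iff_hamiltonian (k := n - 1) hij (by simp; omega)]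
    exact ⟨fun ⟨hw, hne⟩ => hw.resolve_left hne, fun hw => ⟨Or.inr hw, hw.ne_nil⟩⟩
  refine ⟨hpaths, ?_⟩
  simp only [Ne, Set.eq_singleton_iff_unique_mem, (hmem []).mpr (Or.inl rfl), true_and, not_forall,
    exists_prop]
  exact exists_congr fun w => (hpaths w).symm
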